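/- arXiv:2403.18378 — 4 statements merged into one kernel-verified Lean document; each statement's English description precedes it below -/
import Mathlib

section
/- Let V be a real vector space equipped with two symmetric positive semidefinite bilinear forms a and m, let k > 0, and define b(u,v) := a(u,v) − k² m(u,v) and the k-weighted seminorm ‖u‖_{1,k} := √(a(u,u) + k² m(u,u)). Then for all u, v ∈ V one has |b(u,v)| ≤ ‖u‖_{1,k} · ‖v‖_{1,k}. -/
/-!
Pair `u` with `(u, u)` and `v` with `(v, -v)` in `V × V`. The orthogonal sum `a ⊕ k²m` is again
symmetric and positive semidefinite, its value on the two pairs is `b(u, v)`, and its diagonal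
values are `‖u‖²_{1,k}` and `‖v‖²_{1,k}`; so the bound is a single Cauchy–Schwarz inequality.
-/

open Real

namespace LinearMap.BilinForm

section Prod

variable {R M N : Type*} [CommRing R] [AddCommGroup M] [Module R M] [AddCommGroup N] [Module R N]

def prod (A : LinearMap.BilinForm R M) (B : LinearMap.BilinForm R N) :
    LinearMap.BilinForm R (M × N) :=
  A.compl₁₂ (fst R M N) (fst R M N) + B.compl₁₂ (snd R M N) (snd R M N)

@[simp]
lemma prod_apply (A : LinearMap.BilinForm R M) (B : LinearMap.BilinForm R N) (x y : M × N) :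
    A.prod B x y = A x.1 y.1 + B x.2 y.2 :=
  rfl

lemma isSymm_prod {A : LinearMap.BilinForm R M} {B : LinearMap.BilinForm R N}
    (hA : LinearMap.IsSymm A) (hB : LinearMap.IsSymm B) : LinearMap.IsSymm (A.prod B) :=
  LinearMap.isSymm_def.2 fun x y => by
    simpa using congr($(hA.eq x.1 y.1) + $(hB.eq x.2 y.2))

lemma prod_apply_self_nonneg [LinearOrder R] [IsStrictOrderedRing R]
    {A : LinearMap.BilinForm R M} {B : LinearMap.BilinForm R N}
    (hA : ∀ x, 0 ≤ A x x) (hB : ∀ x, 0 ≤ B x x) (x : M × N) : 0 ≤ A.prod B x x :=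
  add_nonneg (hA x.1) (hB x.2)

end Prod

lemma abs_apply_sub_apply_le {M : Type*} [AddCommGroup M] [Module ℝ M]
    {A B : LinearMap.BilinForm ℝ M} (hA : LinearMap.IsSymm A) (hB : LinearMap.IsSymm B)
    (hA₀ : ∀ x, 0 ≤ A x x) (hB₀ : ∀ x, 0 ≤ B x x) (x y : M) :
    |A x y - B x y| ≤ √(A x x + B x x) * √(A y y + B y y) := by
  have hCS := (A.prod B).apply_sq_le_of_symm (prod_apply_self_nonneg hA₀ hB₀) (isSymm_prod hA hB)
    (x, x) (y, -y)
  simp only [prod_apply, map_neg, LinearMap.neg_apply, neg_neg, sub_eq_add_neg] at hCS ⊢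
  rw [← sqrt_mul (add_nonneg (hA₀ x) (hB₀ x))]
  exact abs_le_sqrt hCS

end LinearMap.BilinForm

theorem stmt4_general {V : Type*} [AddCommGroup V] [Module ℝ V]
    (a m : V →ₗ[ℝ] V →ₗ[ℝ] ℝ)
    (ha_symm : ∀ u v, a u v = a v u) (ha_pos : ∀ u, 0 ≤ a u u)
    (hm_symm : ∀ u v, m u v = m v u) (hm_pos : ∀ u, 0 ≤ m u u)
    (k : ℝ)
    (b : V → V → ℝ) (hb : ∀ u v, b u v = a u v - k ^ 2 * m u v)
    (u v : V) :
    |b u v| ≤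
      Real.sqrt (a u u + k ^ 2 * m u u) * Real.sqrt (a v v + k ^ 2 * m v v) := by
  have hkm_symm : LinearMap.IsSymm (k ^ 2 • m) :=
    LinearMap.isSymm_def.2 fun x y => by simp [hm_symm x y]
  have hkm_pos (x : V) : 0 ≤ (k ^ 2 • m) x x := by
    simpa using mul_nonneg (sq_nonneg k) (hm_pos x)
  simpa [hb] using LinearMap.BilinForm.abs_apply_sub_apply_le
    (LinearMap.isSymm_def.2 fun x y => ha_symm x y) hkm_symm ha_pos hkm_pos u v

/-- Lemma 3.11: boundedness of the indefinite Helmholtz form in the k-weighted norm. -/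
theorem stmt4 {V : Type*} [AddCommGroup V] [Module ℝ V]
    (a m : V →ₗ[ℝ] V →ₗ[ℝ] ℝ)
    (ha_symm : ∀ u v, a u v = a v u) (ha_pos : ∀ u, 0 ≤ a u u)
    (hm_symm : ∀ u v, m u v = m v u) (hm_pos : ∀ u, 0 ≤ m u u)
    (k : ℝ) (hk : 0 < k)
    (b : V → V → ℝ) (hb : ∀ u v, b u v = a u v - k ^ 2 * m u v)
    (u v : V) :
    |b u v| ≤
      Real.sqrt (a u u + k ^ 2 * m u u) * Real.sqrt (a v v + k ^ 2 * m v v) :=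
  stmt4_general a m ha_symm ha_pos hm_symm hm_pos k b hb u v
end

section
/- Let V be a real vector space equipped with two symmetric positive semidefinite bilinear forms a and m, let k > 0 and H > 0 with H·k ≤ 1/√2, and define b(u,v) := a(u,v) − k² m(u,v) and ‖u‖_{1,k} := √(a(u,u) + k² m(u,u)). Suppose u, w ∈ V satisfy b(w,w) = b(u,w) and m(w,w) ≤ (H²/2)·a(w,w). Then ‖w‖_{1,k} ≤ 2‖u‖_{1,k}. -/
/-!
Write `‖w‖² = a(w,w) + k²m(w,w) = b(u,w) + 2k²m(w,w)`. Positivity of `a` at `2u - w` and of `m`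
at `2u + w` gives `4 b(u,w) ≤ 4‖u‖² + ‖w‖²`, while the Friedrichs inequality and `k²H² ≤ 1/2`
give `4k²m(w,w) ≤ a(w,w)`, so that `2k²m(w,w) ≤ ‖w‖²/2` can be absorbed: `‖w‖² ≤ 4‖u‖²`.
-/

lemma LinearMap.BilinForm.two_mul_apply_le_add {V : Type*} [AddCommGroup V] [Module ℝ V]
    (a : LinearMap.BilinForm ℝ V) (ha_symm : ∀ u v, a u v = a v u) (ha_pos : ∀ u, 0 ≤ a u u)
    (u v : V) : 2 * a u v ≤ a u u + a v v := by
  have h := ha_pos (u - v)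
  simp only [map_sub, LinearMap.sub_apply, ha_symm v u] at h
  linarith

lemma sq_le_half_of_le_inv_sqrt_two {x : ℝ} (hx : 0 ≤ x) (h : x ≤ 1 / Real.sqrt 2) :
    x ^ 2 ≤ 1 / 2 := by
  calc x ^ 2 ≤ (1 / Real.sqrt 2) ^ 2 := pow_le_pow_left₀ hx h 2
    _ = 1 / 2 := by rw [div_pow, one_pow, Real.sq_sqrt zero_le_two]

/-- Abstract version of Lemma 3.12 (stability of the local projection operators). -/
theorem stmt5 {V : Type*} [AddCommGroup V] [Module ℝ V]
    (a m : V →ₗ[ℝ] V →ₗ[ℝ] ℝ)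
    (ha_symm : ∀ u v, a u v = a v u) (ha_pos : ∀ u, 0 ≤ a u u)
    (hm_symm : ∀ u v, m u v = m v u) (hm_pos : ∀ u, 0 ≤ m u u)
    (k H : ℝ) (hk : 0 < k) (hH : 0 < H) (hHk : H * k ≤ 1 / Real.sqrt 2)
    (b : V → V → ℝ) (hb : ∀ u v, b u v = a u v - k ^ 2 * m u v)
    (u w : V)
    (hproj : b w w = b u w)
    (hFried : m w w ≤ H ^ 2 / 2 * a w w) :
    Real.sqrt (a w w + k ^ 2 * m w w) ≤ 2 * Real.sqrt (a u u + k ^ 2 * m u u) := by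
  have hyoung_a := LinearMap.BilinForm.two_mul_apply_le_add a ha_symm ha_pos ((2 : ℝ) • u) w
  have hyoung_m := LinearMap.BilinForm.two_mul_apply_le_add m hm_symm hm_pos ((2 : ℝ) • u) (-w)
  simp only [map_smul, map_neg, LinearMap.smul_apply, LinearMap.neg_apply, smul_eq_mul]
    at hyoung_a hyoung_m
  have hHk2 : (H * k) ^ 2 ≤ 1 / 2 := sq_le_half_of_le_inv_sqrt_two (by positivity) hHk
  have habsorb : 4 * (k ^ 2 * m w w) ≤ a w w := by
    calc 4 * (k ^ 2 * m w w) ≤ 4 * (k ^ 2 * (H ^ 2 / 2 * a w w)) := by gcongr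
      _ = 2 * (H * k) ^ 2 * a w w := by ring
      _ ≤ 2 * (1 / 2) * a w w := by gcongr; exact ha_pos w
      _ = a w w := by ring
  rw [hb, hb] at hproj
  have hsq : a w w + k ^ 2 * m w w ≤ 2 ^ 2 * (a u u + k ^ 2 * m u u) := by
    have hkm := mul_le_mul_of_nonneg_left hyoung_m (sq_nonneg k)
    have hkM := mul_nonneg (sq_nonneg k) (hm_pos w)
    linarith
  calc Real.sqrt (a w w + k ^ 2 * m w w) ≤ Real.sqrt (2 ^ 2 * (a u u + k ^ 2 * m u u)) :=
        Real.sqrt_le_sqrt hsq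
    _ = 2 * Real.sqrt (a u u + k ^ 2 * m u u) := by
        rw [Real.sqrt_mul' _ (by have := ha_pos u; have := hm_pos u; positivity),
          Real.sqrt_sq zero_le_two]
end

section
/- Let V be a real inner product space whose inner product is (u,v)_{1,k} := a(u,v) + k² m(u,v), where a and m are symmetric positive semidefinite bilinear forms on V and k > 0, and let b(u,v) := a(u,v) − k² m(u,v). Let V₀ ⊆ V be a subspace admitting an orthogonal projection P₀ : V → V₀ with respect to (·,·)_{1,k} (e.g. V₀ complete or finite-dimensional). Let u ∈ V, let w ∈ V₀ satisfy b(u − w, z) = 0 for all z ∈ V₀, and set e := u − w. Suppose ε ≥ 0 satisfies √(m(e,e)) ≤ ε‖e‖_{1,k} and 2kε ≤ 1/2. Then ‖e‖_{1,k} ≤ 2‖u‖_{1,k}, i.e. ‖w − u‖_{1,k} ≤ 2‖u‖_{1,k}. -/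
/-!
Write `e = u - w` and `p = P₀ u`. Since `p - w ∈ V₀`, Galerkin orthogonality of `e` for
`b = (·,·)_{1,k} - 2k² m` and the orthogonality of `u - p` to `V₀` give the Pythagorean splitting
`‖e‖² = ‖u - p‖² + ‖p - w‖²` together with `‖p - w‖² = 2k² m(e, p - w)`. Cauchy–Schwarz for `m`,
the hypothesis `√m(e,e) ≤ ε‖e‖` and `k √m(v,v) ≤ ‖v‖` bound the latter by `2kε‖e‖² ≤ ‖e‖²/2`, which
is absorbed into the left-hand side: `‖e‖² ≤ 2‖u - p‖² ≤ 2‖u‖²`.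
-/

namespace LinearMap.BilinForm

variable {V : Type*} [AddCommGroup V] [Module ℝ V] (B : LinearMap.BilinForm ℝ V)

lemma apply_add_self_of_apply_eq_zero (hB : B.IsSymm) {x y : V} (h : B x y = 0) :
    B (x + y) (x + y) = B x x + B y y := by
  have h' : B y x = 0 := by rw [← hB.eq x y, h]
  simp only [map_add, LinearMap.add_apply, h, h', add_zero, zero_add]

lemma apply_le_sqrt_mul_sqrt (hs : ∀ x, 0 ≤ B x x) (hB : B.IsSymm) (x y : V) :
    B x y ≤ √(B x x) * √(B y y) := by
  rw [← Real.sqrt_mul (hs x)]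
  exact Real.le_sqrt_of_sq_le (B.apply_sq_le_of_symm hs (isSymm_iff.mp hB) x y)

end LinearMap.BilinForm

open LinearMap.BilinForm

lemma mul_sqrt_le_sqrt_of_sq_mul_le {k q r : ℝ} (hk : 0 ≤ k) (h : k ^ 2 * q ≤ r) :
    k * √q ≤ √r := by
  rw [← Real.sqrt_sq hk, ← Real.sqrt_mul (sq_nonneg k)]
  exact Real.sqrt_le_sqrt h

theorem galerkin_error_sq_le {V : Type*} [AddCommGroup V] [Module ℝ V]
    (s m : LinearMap.BilinForm ℝ V) (hs : s.IsSymm) (hm : m.IsSymm) (hm_pos : ∀ x, 0 ≤ m x x)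
    {k : ℝ} (hk : 0 ≤ k) (hms : ∀ x, k ^ 2 * m x x ≤ s x x)
    {V₀ : Submodule ℝ V} {u p w : V} (hp : p ∈ V₀) (hp_orth : ∀ z ∈ V₀, s (u - p) z = 0)
    (hw : w ∈ V₀) (hgal : ∀ z ∈ V₀, s (u - w) z = 2 * k ^ 2 * m (u - w) z)
    {ε : ℝ} (hL2 : √(m (u - w) (u - w)) ≤ ε * √(s (u - w) (u - w)))
    (hsmall : 2 * k * ε ≤ 1 / 2) :
    s (u - w) (u - w) ≤ 2 * s u u := by
  set e := u - w
  set d := p - w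
  have hd : d ∈ V₀ := V₀.sub_mem hp hw
  have he : e = (u - p) + d := by simp only [e, d, sub_add_sub_cancel]
  have hs_pos : ∀ x, 0 ≤ s x x := fun x => (mul_nonneg (sq_nonneg k) (hm_pos x)).trans (hms x)
  have hsplit : s e e = s (u - p) (u - p) + s d d := by
    rw [he]; exact s.apply_add_self_of_apply_eq_zero hs (hp_orth d hd)
  have hproj : s (u - p) (u - p) ≤ s u u := by
    have h := s.apply_add_self_of_apply_eq_zero hs (hp_orth p hp)
    rw [sub_add_cancel] at h
    linarith [hs_pos p]
  have hd_eq : s d d = 2 * k ^ 2 * m e d := by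
    rw [← hgal d hd, he, map_add, LinearMap.add_apply, hp_orth d hd, zero_add]
  have hkme : k * √(m e e) ≤ k * ε * √(s e e) := by
    rw [mul_assoc]; exact mul_le_mul_of_nonneg_left hL2 hk
  have hkmd : k * √(m d d) ≤ √(s e e) :=
    (mul_sqrt_le_sqrt_of_sq_mul_le hk (hms d)).trans
      (Real.sqrt_le_sqrt (by linarith [hs_pos (u - p)]))
  have hcross : 2 * k ^ 2 * m e d ≤ 1 / 2 * s e e :=
    calc 2 * k ^ 2 * m e d ≤ 2 * k ^ 2 * (√(m e e) * √(m d d)) :=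
          mul_le_mul_of_nonneg_left (m.apply_le_sqrt_mul_sqrt hm_pos hm e d) (by positivity)
      _ = 2 * ((k * √(m e e)) * (k * √(m d d))) := by ring
      _ ≤ 2 * ((k * ε * √(s e e)) * √(s e e)) := by
          gcongr 2 * ?_
          exact mul_le_mul hkme hkmd (by positivity) ((by positivity : 0 ≤ k * √(m e e)).trans hkme)
      _ = 2 * k * ε * s e e := by rw [mul_assoc (k * ε), Real.mul_self_sqrt (hs_pos e)]; ring
      _ ≤ 1 / 2 * s e e := mul_le_mul_of_nonneg_right hsmall (hs_pos e)
  linarith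

theorem stmt11_general {V : Type*} [AddCommGroup V] [Module ℝ V]
    (a m : V →ₗ[ℝ] V →ₗ[ℝ] ℝ)
    (ha_symm : ∀ u v, a u v = a v u) (ha_pos : ∀ u, 0 ≤ a u u)
    (hm_symm : ∀ u v, m u v = m v u) (hm_pos : ∀ u, 0 ≤ m u u)
    (k : ℝ) (hk : 0 < k)
    (ip : V → V → ℝ) (hip : ∀ u v, ip u v = a u v + k ^ 2 * m u v)
    (b : V → V → ℝ) (hb : ∀ u v, b u v = a u v - k ^ 2 * m u v)
    (V₀ : Submodule ℝ V) (P₀ : V → V)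
    (hP₀mem : ∀ u : V, P₀ u ∈ V₀)
    (hP₀orth : ∀ u : V, ∀ z ∈ V₀, ip (u - P₀ u) z = 0)
    (u w : V) (hw : w ∈ V₀)
    (hgal : ∀ z ∈ V₀, b (u - w) z = 0)
    (ε : ℝ)
    (hL2 : Real.sqrt (m (u - w) (u - w)) ≤ ε * Real.sqrt (ip (u - w) (u - w)))
    (hsmall : 2 * k * ε ≤ 1 / 2) :
    Real.sqrt (ip (u - w) (u - w)) ≤ 2 * Real.sqrt (ip u u) := by
  set s : LinearMap.BilinForm ℝ V := a + k ^ 2 • m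
  have hip_s : ∀ x y, ip x y = s x y := fun x y => by simp [s, hip]
  have hm : IsSymm m := ⟨hm_symm⟩
  have hs : s.IsSymm := IsSymm.add ⟨ha_symm⟩ (hm.smul _)
  have hms : ∀ x, k ^ 2 * m x x ≤ s x x := fun x => by simp [s, ha_pos x]
  have hgal_s : ∀ z ∈ V₀, s (u - w) z = 2 * k ^ 2 * m (u - w) z := fun z hz => by
    have h := hgal z hz
    rw [hb] at h
    simp only [s, LinearMap.add_apply, LinearMap.smul_apply, smul_eq_mul]
    linarith
  simp only [hip_s] at hP₀orth hL2 ⊢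
  have hsq := galerkin_error_sq_le s m hs hm hm_pos hk.le hms (hP₀mem u) (hP₀orth u) hw hgal_s hL2
    hsmall
  have hu : 0 ≤ s u u := (mul_nonneg (sq_nonneg k) (hm_pos u)).trans (hms u)
  calc √(s (u - w) (u - w)) ≤ √(2 ^ 2 * s u u) := Real.sqrt_le_sqrt (by linarith)
    _ = 2 * √(s u u) := by rw [Real.sqrt_mul (by positivity), Real.sqrt_sq zero_le_two]

/-- Abstract version of the energy-norm stability estimate (3.29) in Lemma 3.14
(stability of the coarse Helmholtz projector T₀). -/
theorem stmt11 {V : Type*} [AddCommGroup V] [Module ℝ V]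
    (a m : V →ₗ[ℝ] V →ₗ[ℝ] ℝ)
    (ha_symm : ∀ u v, a u v = a v u) (ha_pos : ∀ u, 0 ≤ a u u)
    (hm_symm : ∀ u v, m u v = m v u) (hm_pos : ∀ u, 0 ≤ m u u)
    (k : ℝ) (hk : 0 < k)
    (ip : V → V → ℝ) (hip : ∀ u v, ip u v = a u v + k ^ 2 * m u v)
    (hdef : ∀ v : V, ip v v = 0 → v = 0)
    (b : V → V → ℝ) (hb : ∀ u v, b u v = a u v - k ^ 2 * m u v)
    (V₀ : Submodule ℝ V) (P₀ : V → V)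
    (hP₀mem : ∀ u : V, P₀ u ∈ V₀)
    (hP₀orth : ∀ u : V, ∀ z ∈ V₀, ip (u - P₀ u) z = 0)
    (u w : V) (hw : w ∈ V₀)
    (hgal : ∀ z ∈ V₀, b (u - w) z = 0)
    (ε : ℝ) (hε : 0 ≤ ε)
    (hL2 : Real.sqrt (m (u - w) (u - w)) ≤ ε * Real.sqrt (ip (u - w) (u - w)))
    (hsmall : 2 * k * ε ≤ 1 / 2) :
    Real.sqrt (ip (u - w) (u - w)) ≤ 2 * Real.sqrt (ip u u) :=
  stmt11_general a m ha_symm ha_pos hm_symm hm_pos k hk ip hip b hb V₀ P₀ hP₀mem hP₀orth u w hw hgal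
    ε hL2 hsmall
end

section
/- Let V and W be real vector spaces, let a, m be symmetric positive semidefinite bilinear forms on V and a_W, m_W symmetric positive semidefinite bilinear forms on W, and let k > 0. Define on each space the forms (·,·)_{1,k} := a + k²m (resp. a_W + k²m_W) and b := a − k²m (resp. b_W := a_W − k²m_W). Let E : W → V be a linear map that preserves both forms: a(Ew, Ew') = a_W(w, w') and m(Ew, Ew') = m_W(w, w') for all w, w' ∈ W. Let u ∈ V and let t, p ∈ W satisfy b_W(t, v) = b(u, Ev) for all v ∈ W and (p, v)_{1,k,W} = (u, Ev)_{1,k} for all v ∈ W. Then (Ep, u)_{1,k} = (Et, u)_{1,k} + 2k²·m(u − Et, Ep). -/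
namespace LinearMap.BilinForm

variable {R V : Type*} [CommRing R] [AddCommGroup V] [Module R V]

/-- Writing `b = a - c • m` and `s = a + c • m`, the hypotheses say `b x y = b u y` and
`s y x = s u x`; since `s = b + 2c • m` and both forms are symmetric, this gives
`s y u = s x u + 2c · m (u - x) y`. -/
theorem add_mul_apply_eq_of_projections {a m : LinearMap.BilinForm R V} (ha : a.IsSymm)
    (hm : m.IsSymm) (c : R) {u x y : V}
    (hx : a x y - c * m x y = a u y - c * m u y)
    (hy : a y x + c * m y x = a u x + c * m u x) :
    a y u + c * m y u = a x u + c * m x u + 2 * c * m (u - x) y := by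
  rw [ha.eq y x, hm.eq y x] at hy
  rw [ha.eq y u, hm.eq y u, ha.eq x u, hm.eq x u, map_sub, LinearMap.sub_apply]
  linear_combination hy - hx

end LinearMap.BilinForm

theorem stmt15_general {V W : Type*} [AddCommGroup V] [Module ℝ V] [AddCommGroup W] [Module ℝ W]
    (a m : V →ₗ[ℝ] V →ₗ[ℝ] ℝ) (aW mW : W →ₗ[ℝ] W →ₗ[ℝ] ℝ)
    (ha_symm : ∀ u v, a u v = a v u)
    (hm_symm : ∀ u v, m u v = m v u)
    (k : ℝ)
    (E : W →ₗ[ℝ] V)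
    (hEa : ∀ w w' : W, a (E w) (E w') = aW w w')
    (hEm : ∀ w w' : W, m (E w) (E w') = mW w w')
    (u : V) (t p : W)
    (hT : ∀ v : W, aW t v - k ^ 2 * mW t v = a u (E v) - k ^ 2 * m u (E v))
    (hP : ∀ v : W, aW p v + k ^ 2 * mW p v = a u (E v) + k ^ 2 * m u (E v)) :
    a (E p) u + k ^ 2 * m (E p) u =
      (a (E t) u + k ^ 2 * m (E t) u) + 2 * k ^ 2 * m (u - E t) (E p) := by
  have hx := hT p
  have hy := hP t
  rw [← hEa, ← hEm] at hx hy
  exact LinearMap.BilinForm.add_mul_apply_eq_of_projections ⟨ha_symm⟩ ⟨hm_symm⟩ (k ^ 2) hx hy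

/-- Abstract version of the identity derived in Step 1 of the proof of Lemma 4.1,
relating the Helmholtz local projector (t) and the k-weighted local projector (p). -/
theorem stmt15 {V W : Type*} [AddCommGroup V] [Module ℝ V] [AddCommGroup W] [Module ℝ W]
    (a m : V →ₗ[ℝ] V →ₗ[ℝ] ℝ) (aW mW : W →ₗ[ℝ] W →ₗ[ℝ] ℝ)
    (ha_symm : ∀ u v, a u v = a v u) (ha_pos : ∀ u, 0 ≤ a u u)
    (hm_symm : ∀ u v, m u v = m v u) (hm_pos : ∀ u, 0 ≤ m u u)
    (haW_symm : ∀ u v, aW u v = aW v u) (haW_pos : ∀ u, 0 ≤ aW u u)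
    (hmW_symm : ∀ u v, mW u v = mW v u) (hmW_pos : ∀ u, 0 ≤ mW u u)
    (k : ℝ) (hk : 0 < k)
    (E : W →ₗ[ℝ] V)
    (hEa : ∀ w w' : W, a (E w) (E w') = aW w w')
    (hEm : ∀ w w' : W, m (E w) (E w') = mW w w')
    (u : V) (t p : W)
    (hT : ∀ v : W, aW t v - k ^ 2 * mW t v = a u (E v) - k ^ 2 * m u (E v))
    (hP : ∀ v : W, aW p v + k ^ 2 * mW p v = a u (E v) + k ^ 2 * m u (E v)) :
    a (E p) u + k ^ 2 * m (E p) u =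
      (a (E t) u + k ^ 2 * m (E t) u) + 2 * k ^ 2 * m (u - E t) (E p) :=
  stmt15_general a m aW mW ha_symm hm_symm k E hEa hEm u t p hT hP
end
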